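/- Let P be a constant-coefficient skew-symmetric differential operator on ℝ (P* = −P) and h, u smooth rapidly decaying functions. Then (Λ^s(h P u), Λ^s u)_{L²} = ([Λ^s, h] P u, Λ^s u)_{L²} − (1/2)([P, h] Λ^s u, Λ^s u)_{L²}, where Λ = (1−∂_x²)^{1/2}. -/

import Mathlib

/-!
`Λ^s` is a Fourier multiplier, and so is `∂_x` (with symbol `2πiξ`); Fourier multipliers commute,
so `Λ^s P = P Λ^s` and `[Λ^s, h] P u = Λ^s (h P u) - h P v` with `v = Λ^s u`. Skew-symmetry of `P`
gives `(P (h v), v) = -(h v, P v)`, hence `([P, h] v, v) = -2 (h P v, v)`, and the two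
`(h P v, v)` terms on the right-hand side cancel.
-/

open MeasureTheory Real

/-- The (real part of the) Bessel potential operator `Λ^s = (1 - ∂_x²)^{s/2}` acting on real
functions, via the Fourier multiplier with symbol `(1 + ξ²)^{s/2}`. -/
noncomputable def lamR (s : ℝ) (f : ℝ → ℝ) : ℝ → ℝ :=
  fun x => (FourierTransformInv.fourierInv
    (fun ξ => ((1 + ξ ^ 2) ^ (s / 2) : ℝ) • FourierTransform.fourier (fun y => (f y : ℂ)) ξ) x).re

/-- A constant-coefficient differential operator `P = ∑ a i ∂_x^i`. -/
noncomputable def diffOp (n : ℕ) (a : ℕ → ℝ) (f : ℝ → ℝ) : ℝ → ℝ :=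
  fun x => ∑ i ∈ Finset.range (n + 1), a i * iteratedDeriv i f x

open SchwartzMap FourierTransform LineDeriv

namespace SchwartzMap

section Deriv

variable {F : Type*} [NormedAddCommGroup F] [NormedSpace ℝ F]

theorem lineDerivOp_one_eq_derivCLM (f : 𝓢(ℝ, F)) : ∂_{(1 : ℝ)} f = derivCLM ℝ F f := by
  ext x
  rw [lineDerivOp_apply_eq_fderiv, derivCLM_apply, fderiv_apply_one_eq_deriv]

theorem iteratedDeriv_eq_derivCLM_pow (i : ℕ) (f : 𝓢(ℝ, F)) :
    iteratedDeriv i f = ⇑((derivCLM ℝ F ^ i) f) := by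
  induction i generalizing f with
  | zero => rfl
  | succ i ih =>
    rw [iteratedDeriv_succ', pow_succ]
    exact ih (derivCLM ℝ F f)

theorem derivCLM_postcompCLM {G : Type*} [NormedAddCommGroup G] [NormedSpace ℝ G]
    (L : F →L[ℝ] G) (f : 𝓢(ℝ, F)) :
    derivCLM ℝ G (f.postcompCLM L) = (derivCLM ℝ F f).postcompCLM L := by
  ext x
  exact (L.hasFDerivAt.comp_hasDerivAt x (f.hasDerivAt x)).deriv

end Deriv

theorem fourierMultiplierCLM_derivCLM {F : Type*} [NormedAddCommGroup F] [NormedSpace ℂ F]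
    [CompleteSpace F] {g : ℝ → ℝ} (hg : g.HasTemperateGrowth) (f : 𝓢(ℝ, F)) :
    fourierMultiplierCLM F g (derivCLM ℝ F f) = derivCLM ℝ F (fourierMultiplierCLM F g f) := by
  set g' : ℝ → ℂ := fun x ↦ RCLike.ofReal (g x)
  set ι : ℝ → ℂ := fun x ↦ RCLike.ofReal (inner ℝ x (1 : ℝ))
  have hι : (fun x : ℝ ↦ inner ℝ x (1 : ℝ)).HasTemperateGrowth := by fun_prop
  have hg' : g'.HasTemperateGrowth := by fun_prop
  have hι' : ι.HasTemperateGrowth := by fun_prop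
  rw [← lineDerivOp_one_eq_derivCLM, ← lineDerivOp_one_eq_derivCLM,
    lineDeriv_eq_fourierMultiplierCLM, lineDeriv_eq_fourierMultiplierCLM,
    ← fourierMultiplierCLM_ofReal ℂ hg, ← fourierMultiplierCLM_ofReal ℂ hg,
    ← fourierMultiplierCLM_ofReal ℂ hι, ← fourierMultiplierCLM_ofReal ℂ hι, map_smul,
    fourierMultiplierCLM_fourierMultiplierCLM_apply hg' hι',
    fourierMultiplierCLM_fourierMultiplierCLM_apply hι' hg', mul_comm g']

theorem integrable_mul {D 𝕜 : Type*} [NormedAddCommGroup D] [NormedSpace ℝ D] [MeasurableSpace D]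
    [BorelSpace D] [SecondCountableTopology D] {μ : Measure D} [μ.HasTemperateGrowth] [RCLike 𝕜]
    (f g : 𝓢(D, 𝕜)) : Integrable (fun x ↦ f x * g x) μ :=
  (pairing (ContinuousLinearMap.mul 𝕜 𝕜) f g).integrable

end SchwartzMap

theorem hasTemperateGrowth_one_add_sq_rpow (r : ℝ) :
    (fun x : ℝ ↦ (1 + x ^ 2) ^ r).HasTemperateGrowth := by
  simpa only [Real.norm_eq_abs, sq_abs] using Function.hasTemperateGrowth_one_add_norm_sq_rpow ℝ r

noncomputable def besselPotentialReal (s : ℝ) : 𝓢(ℝ, ℝ) →L[ℝ] 𝓢(ℝ, ℝ) :=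
  postcompCLM Complex.reCLM ∘L fourierMultiplierCLM ℂ (fun ξ : ℝ ↦ (1 + ξ ^ 2) ^ (s / 2)) ∘L
    postcompCLM Complex.ofRealCLM

theorem lamR_eq_besselPotentialReal (s : ℝ) (f : 𝓢(ℝ, ℝ)) :
    lamR s f = besselPotentialReal s f := by
  ext x
  simp only [lamR, Complex.real_smul, besselPotentialReal, ContinuousLinearMap.comp_apply,
    fourierMultiplierCLM_apply, postcompCLM_apply, fourierInv_coe,
    smulLeftCLM_apply (hasTemperateGrowth_one_add_sq_rpow (s / 2)), fourier_coe, Complex.reCLM_apply]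
  rfl

theorem commute_besselPotentialReal_derivCLM (s : ℝ) :
    Commute (besselPotentialReal s) (derivCLM ℝ ℝ) := by
  ext1 f
  simp only [mul_apply_eq_comp, besselPotentialReal, ContinuousLinearMap.comp_apply]
  rw [← derivCLM_postcompCLM,
    fourierMultiplierCLM_derivCLM (hasTemperateGrowth_one_add_sq_rpow (s / 2)),
    derivCLM_postcompCLM]

noncomputable def diffOpCLM (n : ℕ) (a : ℕ → ℝ) : 𝓢(ℝ, ℝ) →L[ℝ] 𝓢(ℝ, ℝ) :=
  ∑ i ∈ Finset.range (n + 1), a i • derivCLM ℝ ℝ ^ i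

theorem diffOp_eq_diffOpCLM (n : ℕ) (a : ℕ → ℝ) (f : 𝓢(ℝ, ℝ)) :
    diffOp n a f = diffOpCLM n a f := by
  ext x
  simp [diffOp, diffOpCLM, iteratedDeriv_eq_derivCLM_pow]

theorem Commute.diffOpCLM {T : 𝓢(ℝ, ℝ) →L[ℝ] 𝓢(ℝ, ℝ)} (hT : Commute T (derivCLM ℝ ℝ))
    (n : ℕ) (a : ℕ → ℝ) : Commute T (diffOpCLM n a) :=
  Commute.sum_right _ _ _ fun i _ ↦ (hT.pow_right i).smul_right (a i)

theorem integrable_mul_mul_of_eq {h : ℝ → ℝ} {f v w : 𝓢(ℝ, ℝ)} (hw : ∀ x, w x = h x * v x) :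
    Integrable (fun x ↦ h x * f x * v x) := by
  convert w.integrable_mul (μ := volume) f using 2 with x
  rw [hw]
  ring

theorem integral_commutator_mul_self {P : 𝓢(ℝ, ℝ) → 𝓢(ℝ, ℝ)}
    (hP : ∀ f g : 𝓢(ℝ, ℝ), ∫ x, P f x * g x = -∫ x, f x * P g x) {h : ℝ → ℝ} {v w : 𝓢(ℝ, ℝ)}
    (hw : ∀ x, w x = h x * v x) :
    ∫ x, (P w x - h x * P v x) * v x = -2 * ∫ x, h x * P v x * v x := by
  have hwPv : (fun x ↦ h x * P v x * v x) = fun x ↦ w x * P v x := by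
    ext x
    rw [hw]
    ring
  simp_rw [sub_mul]
  rw [integral_sub ((P w).integrable_mul v) (integrable_mul_mul_of_eq hw), hP, hwPv]
  ring

/-- For a constant-coefficient skew-symmetric differential operator `P` and
smooth rapidly decaying `h, u`,
`(Λ^s(h P u), Λ^s u) = ([Λ^s,h] P u, Λ^s u) - (1/2)([P,h] Λ^s u, Λ^s u)`. -/
theorem stmt9 (s : ℝ) (n : ℕ) (a : ℕ → ℝ)
    (hskew : ∀ f g : SchwartzMap ℝ ℝ,
      ∫ x : ℝ, diffOp n a f x * g x = -∫ x : ℝ, f x * diffOp n a g x)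
    (h u : SchwartzMap ℝ ℝ) :
    ∫ x : ℝ, lamR s (fun y => h y * diffOp n a u y) x * lamR s u x =
      (∫ x : ℝ, (lamR s (fun y => h y * diffOp n a u y) x - h x * lamR s (diffOp n a u) x) *
          lamR s u x)
      - (1 / 2) * ∫ x : ℝ,
          (diffOp n a (fun y => h y * lamR s u y) x - h x * diffOp n a (lamR s u) x) *
            lamR s u x := by
  set Λ := besselPotentialReal s
  set P := diffOpCLM n a
  set H : 𝓢(ℝ, ℝ) →L[ℝ] 𝓢(ℝ, ℝ) := smulLeftCLM ℝ ⇑h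
  have hH (f : 𝓢(ℝ, ℝ)) (x : ℝ) : H f x = h x * f x :=
    smulLeftCLM_apply_apply h.hasTemperateGrowth f x
  have hHPu : (fun y ↦ h y * diffOp n a u y) = H (P u) := by
    ext y
    rw [hH, diffOp_eq_diffOpCLM]
  have hHΛu : (fun y ↦ h y * lamR s u y) = H (Λ u) := by
    ext y
    rw [hH, lamR_eq_besselPotentialReal]
  have hP : ∀ f g : 𝓢(ℝ, ℝ), ∫ x, P f x * g x = -∫ x, f x * P g x := by
    simpa only [diffOp_eq_diffOpCLM] using hskew
  have hΛP : Λ (P u) = P (Λ u) :=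
    DFunLike.congr_fun ((commute_besselPotentialReal_derivCLM s).diffOpCLM n a).eq u
  rw [hHPu, hHΛu]
  simp only [diffOp_eq_diffOpCLM, lamR_eq_besselPotentialReal]
  rw [hΛP, integral_commutator_mul_self hP (hH (Λ u))]
  simp_rw [sub_mul]
  rw [integral_sub ((Λ (H (P u))).integrable_mul (Λ u)) (integrable_mul_mul_of_eq (hH (Λ u)))]
  ring
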